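/- arXiv:1208.3652 — 5 statements merged into one kernel-verified Lean document; each statement's English description precedes it below -/
import Mathlib

section
/- Let X be a geodesic metric space. Suppose there exists a quasi-geodesic line γ : ℝ → X and an increasing sequence (t_i) of positive integers such that for each i, γ(−t_i) and γ(t_i) can be connected by a continuous path that does not enter the ball of radius i around γ(0). Then X is not quasi-isometric to a simplicial tree. -/
/-!
Suppose `φ : X → T` is a `(λ, ε)`-quasi-isometry to a tree. Points of a tree are joined by a
unique geodesic, and a coarse path (a map of an interval with uniformly bounded jumps) between
two vertices passes near every vertex of their geodesic. Let `m` be the median of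
`φ (γ (-n))`, `φ (γ n)` and `φ (γ 0)`. The coarse paths `φ ∘ γ` on `[-n, 0]` and on `[0, n]`
both pass near `m`, at parameters `s ≤ 0 ≤ u` whose images are close; since `γ` is a
quasi-geodesic, `|s| ≤ |s - u|` is bounded, so `m` stays within a bound `R`, independent of
`n`, of `φ (γ 0)`. The image of the `i`-th detour is a coarse path from `φ (γ (-n))` to
`φ (γ n)`, so it passes near `m` too, yet it stays at distance about `i / λ` from `φ (γ 0)`.
This is impossible for large `i`.
-/

/-- A metric space is geodesic if any two points are joined by an isometrically
embedded segment. -/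
def IsGeodesicSpace (X : Type) [MetricSpace X] : Prop :=
  ∀ x y : X, ∃ γ : ℝ → X, γ 0 = x ∧ γ (dist x y) = y ∧
    ∀ s ∈ Set.Icc (0 : ℝ) (dist x y), ∀ t ∈ Set.Icc (0 : ℝ) (dist x y),
      dist (γ s) (γ t) = |s - t|

/-- `γ` is a `(K,C)`-quasi-geodesic on the set `I ⊆ ℝ`. -/
def IsQuasiGeodesicOn {X : Type} [MetricSpace X] (K C : ℝ) (γ : ℝ → X) (I : Set ℝ) :
    Prop :=
  ∀ s ∈ I, ∀ t ∈ I,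
    (1 / K) * |s - t| - C ≤ dist (γ s) (γ t) ∧ dist (γ s) (γ t) ≤ K * |s - t| + C

/-- `X` is a quasi-tree: there is a simplicial tree (with its path metric, here the
graph metric on its vertex set) and a quasi-isometry from `X` to it. -/
def IsQuasiTree (X : Type) [MetricSpace X] : Prop :=
  ∃ (V : Type) (T : SimpleGraph V), T.IsTree ∧
    ∃ (φ : X → V) (lam eps : ℝ), 1 ≤ lam ∧ 0 ≤ eps ∧
      (∀ x y : X,
        (1 / lam) * dist x y - eps ≤ (T.dist (φ x) (φ y) : ℝ) ∧
          (T.dist (φ x) (φ y) : ℝ) ≤ lam * dist x y + eps) ∧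
      (∀ v : V, ∃ x : X, (T.dist (φ x) v : ℝ) ≤ eps)

namespace SimpleGraph

variable {V : Type*}

def Between (G : SimpleGraph V) (x m y : V) : Prop :=
  G.dist x m + G.dist m y = G.dist x y

theorem Between.symm {G : SimpleGraph V} {x m y : V} (h : G.Between x m y) :
    G.Between y m x := by
  unfold Between at *
  rw [dist_comm, add_comm, dist_comm (u := m), h, dist_comm]

namespace IsTree

variable {T : SimpleGraph V}

theorem length_eq_dist_of_isPath (hT : T.IsTree) {u v : V} {p : T.Walk u v} (hp : p.IsPath) :
    p.length = T.dist u v := by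
  obtain ⟨q, hq, hqlen⟩ := hT.connected.exists_path_of_dist u v
  have : p = q := congrArg Subtype.val <|
    (hT.isAcyclic.subsingleton_path u v).elim ⟨p, hp⟩ ⟨q, hq⟩
  rw [this, hqlen]

theorem between_of_mem_support (hT : T.IsTree) {u v m : V} {p : T.Walk u v} (hp : p.IsPath)
    (hm : m ∈ p.support) : T.Between u m v := by
  classical
  have hlen := congrArg Walk.length (p.take_spec hm)
  rw [Walk.length_append, hT.length_eq_dist_of_isPath (hp.takeUntil hm),
    hT.length_eq_dist_of_isPath (hp.dropUntil hm), hT.length_eq_dist_of_isPath hp] at hlen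
  exact hlen

theorem mem_support_of_between (hT : T.IsTree) {u v m : V} {p : T.Walk u v} (hp : p.IsPath)
    (hm : T.Between u m v) : m ∈ p.support := by
  obtain ⟨q₁, hq₁⟩ := hT.connected.exists_walk_length_eq_dist u m
  obtain ⟨q₂, hq₂⟩ := hT.connected.exists_walk_length_eq_dist m v
  have hq : (q₁.append q₂).IsPath := by
    apply Walk.isPath_of_length_eq_dist
    rw [Walk.length_append, hq₁, hq₂, hm]
  have : q₁.append q₂ = p := congrArg Subtype.val <|
    (hT.isAcyclic.subsingleton_path u v).elim ⟨_, hq⟩ ⟨p, hp⟩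
  rw [← this, Walk.mem_support_append_iff]
  exact Or.inl q₁.end_mem_support

theorem between_or_between (hT : T.IsTree) {x m y : V} (h : T.Between x m y) (z : V) :
    T.Between x m z ∨ T.Between z m y := by
  classical
  obtain ⟨p₁, hp₁, -⟩ := hT.connected.exists_path_of_dist x z
  obtain ⟨p₂, hp₂, -⟩ := hT.connected.exists_path_of_dist z y
  have hm := (p₁.append p₂).support_bypass_subset_support
    (hT.mem_support_of_between (p₁.append p₂).bypass_isPath h)
  rw [Walk.mem_support_append_iff] at hm
  exact hm.imp (hT.between_of_mem_support hp₁) (hT.between_of_mem_support hp₂)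

theorem between_of_forall_dist_le (hT : T.IsTree) {a b c m : V} {p : T.Walk a b}
    (hp : p.IsPath) (hm : m ∈ p.support) (hmin : ∀ v ∈ p.support, T.dist m c ≤ T.dist v c) :
    T.Between a m c := by
  classical
  obtain ⟨q, hq, -⟩ := hT.connected.exists_path_of_dist m c
  have hdisj : ∀ v ∈ (p.takeUntil m hm).support, v ∉ q.support.tail := by
    intro v hv hvq
    have h₁ := hT.between_of_mem_support hq (List.mem_of_mem_tail hvq)
    have h₂ := hmin v (p.support_takeUntil_subset_support hm hv)
    unfold Between at h₁
    obtain rfl : m = v := (hT.connected m v).dist_eq_zero_iff.mp (by omega)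
    have hnodup := hq.support_nodup
    rw [← q.cons_tail_support, List.nodup_cons] at hnodup
    exact hnodup.1 hvq
  have hpath : ((p.takeUntil m hm).append q).IsPath := by
    rw [Walk.isPath_def, Walk.support_append]
    exact (hp.takeUntil hm).support_nodup.append
      ((List.tail_sublist _).nodup hq.support_nodup) hdisj
  exact hT.between_of_mem_support hpath (by simp)

theorem exists_median (hT : T.IsTree) (a b c : V) :
    ∃ m, T.Between a m b ∧ T.Between a m c ∧ T.Between c m b := by
  classical
  obtain ⟨p, hp, -⟩ := hT.connected.exists_path_of_dist a b
  obtain ⟨m, hm, hmin⟩ := p.support.toFinset.exists_min_image (T.dist · c)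
    ⟨a, by simp⟩
  simp only [List.mem_toFinset] at hm hmin
  refine ⟨m, hT.between_of_mem_support hp hm, hT.between_of_forall_dist_le hp hm hmin, ?_⟩
  refine (hT.between_of_forall_dist_le hp.reverse (by simpa using hm) ?_).symm
  simpa using hmin

theorem exists_dist_le_of_chain (hT : T.IsTree) {D : ℝ} (hD : 0 ≤ D) {m : V} (n : ℕ)
    (v : ℕ → V) (hjump : ∀ j < n, (T.dist (v j) (v (j + 1)) : ℝ) ≤ D)
    (hm : T.Between (v 0) m (v n)) : ∃ j ≤ n, (T.dist (v j) m : ℝ) ≤ D := by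
  induction n generalizing v with
  | zero =>
    refine ⟨0, le_rfl, ?_⟩
    have : T.dist (v 0) m = 0 := by unfold Between at hm; rw [dist_self] at hm; omega
    rw [this, Nat.cast_zero]
    exact hD
  | succ n ih =>
    rcases hT.between_or_between hm (v 1) with h | h
    · refine ⟨0, (n + 1).zero_le, le_trans ?_ (hjump 0 n.succ_pos)⟩
      unfold Between at h
      exact_mod_cast (by omega : T.dist (v 0) m ≤ T.dist (v 0) (v 1))
    · obtain ⟨j, hj, hd⟩ := ih (fun j => v (j + 1)) (fun j hj => hjump (j + 1) (by omega)) h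
      exact ⟨j + 1, by omega, hd⟩

theorem exists_dist_le_of_between (hT : T.IsTree) {f : ℝ → V} {a b δ D : ℝ}
    (hab : a ≤ b) (hδ : 0 < δ)
    (hf : ∀ s ∈ Set.Icc a b, ∀ t ∈ Set.Icc a b, |s - t| < δ → (T.dist (f s) (f t) : ℝ) ≤ D)
    {m : V} (hm : T.Between (f a) m (f b)) : ∃ s ∈ Set.Icc a b, (T.dist (f s) m : ℝ) ≤ D := by
  have hD : 0 ≤ D := by
    simpa using hf a ⟨le_rfl, hab⟩ a ⟨le_rfl, hab⟩ (by simpa using hδ)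
  obtain ⟨N, hN⟩ := exists_nat_gt ((b - a) / δ)
  have hN₀ : (0 : ℝ) < N := (div_nonneg (sub_nonneg.2 hab) hδ.le).trans_lt hN
  set h := (b - a) / N with h_def
  have hh₀ : 0 ≤ h := div_nonneg (sub_nonneg.2 hab) hN₀.le
  have hhδ : h < δ := by
    rw [h_def, div_lt_iff₀ hN₀]
    rwa [div_lt_iff₀ hδ, mul_comm] at hN
  have hNh : a + N * h = b := by
    rw [h_def, mul_div_cancel₀ _ hN₀.ne']
    ring
  have hx : ∀ j ≤ N, a + j * h ∈ Set.Icc a b := by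
    intro j hj
    refine ⟨le_add_of_nonneg_right (by positivity), ?_⟩
    rw [← hNh]
    gcongr
  obtain ⟨j, hj, hjm⟩ := hT.exists_dist_le_of_chain hD N (fun j => f (a + j * h))
    (fun j hj => hf _ (hx j hj.le) _ (hx (j + 1) hj) (by
      rw [Nat.cast_succ, show a + j * h - (a + (j + 1) * h) = -h by ring, abs_neg,
        abs_of_nonneg hh₀]
      exact hhδ))
    (by simpa [hNh] using hm)
  exact ⟨_, hx j hj, hjm⟩

end IsTree

end SimpleGraph

theorem exists_dist_le_of_between_of_path {V X : Type*} [MetricSpace X] {T : SimpleGraph V}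
    (hT : T.IsTree) {φ : X → V} {lam eps : ℝ}
    (hlam : 0 ≤ lam) (hφ : ∀ x y, (T.dist (φ x) (φ y) : ℝ) ≤ lam * dist x y + eps)
    {x y : X} (p : Path x y) {m : V} (hm : T.Between (φ x) m (φ y)) :
    ∃ s, (T.dist (φ (p s)) m : ℝ) ≤ lam + eps := by
  obtain ⟨δ, hδ, hp⟩ := Metric.uniformContinuous_iff.mp
    (CompactSpace.uniformContinuous_of_continuous p.continuous) 1 one_pos
  have hcoarse : ∀ s ∈ Set.Icc (0 : ℝ) 1, ∀ t ∈ Set.Icc (0 : ℝ) 1, |s - t| < δ →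
      (T.dist (φ (p.extend s)) (φ (p.extend t)) : ℝ) ≤ lam + eps := by
    intro s hs t ht hst
    have hclose : dist (p ⟨s, hs⟩) (p ⟨t, ht⟩) < 1 :=
      hp (by rwa [Subtype.dist_eq, Real.dist_eq])
    rw [p.extend_apply hs, p.extend_apply ht]
    calc (T.dist (φ (p ⟨s, hs⟩)) (φ (p ⟨t, ht⟩)) : ℝ)
        ≤ lam * dist (p ⟨s, hs⟩) (p ⟨t, ht⟩) + eps := hφ _ _
      _ ≤ lam * 1 + eps := by gcongr
      _ = lam + eps := by ring
  obtain ⟨s, hs, hsm⟩ := hT.exists_dist_le_of_between zero_le_one hδ hcoarse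
    (by simpa using hm)
  exact ⟨⟨s, hs⟩, by simpa [p.extend_apply hs] using hsm⟩

theorem exists_dist_median_le_of_isQuasiGeodesicOn {V : Type*} {X : Type} [MetricSpace X]
    {T : SimpleGraph V} (hT : T.IsTree) {K C lam eps : ℝ} (hK : 0 < K) (hlam : 0 < lam) {γ : ℝ → X}
    (hγ : IsQuasiGeodesicOn K C γ Set.univ) {φ : X → V}
    (hφ₁ : ∀ x y, (1 / lam) * dist x y - eps ≤ (T.dist (φ x) (φ y) : ℝ))
    (hφ₂ : ∀ x y, (T.dist (φ x) (φ y) : ℝ) ≤ lam * dist x y + eps) :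
    ∃ R, ∀ n : ℝ, 0 ≤ n → ∀ m, T.Between (φ (γ (-n))) m (φ (γ 0)) →
      T.Between (φ (γ 0)) m (φ (γ n)) → (T.dist (φ (γ 0)) m : ℝ) ≤ R := by
  set D := lam * (K + C) + eps
  have htri : ∀ u v w : V, (T.dist u w : ℝ) ≤ T.dist u v + T.dist v w := fun u v w => by
    exact_mod_cast hT.connected.dist_triangle
  have hcoarse : ∀ s u, |s - u| < 1 → (T.dist (φ (γ s)) (φ (γ u)) : ℝ) ≤ D := by
    intro s u hsu
    calc (T.dist (φ (γ s)) (φ (γ u)) : ℝ)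
        ≤ lam * dist (γ s) (γ u) + eps := hφ₂ _ _
      _ ≤ lam * (K * |s - u| + C) + eps := by gcongr; exact (hγ s trivial u trivial).2
      _ ≤ lam * (K + C) + eps := by gcongr; exact mul_le_of_le_one_right hK.le hsu.le
  refine ⟨lam * (K * (K * (lam * (2 * D + eps) + C)) + C) + eps + D,
    fun n hn m hm₁ hm₂ => ?_⟩
  obtain ⟨s, ⟨-, hs⟩, hsm⟩ := hT.exists_dist_le_of_between (f := φ ∘ γ) (by linarith) one_pos
    (fun s _ u _ => hcoarse s u) hm₁
  obtain ⟨u, ⟨hu, -⟩, hum⟩ := hT.exists_dist_le_of_between (f := φ ∘ γ) hn one_pos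
    (fun s _ u _ => hcoarse s u) hm₂
  have hsu : (T.dist (φ (γ s)) (φ (γ u)) : ℝ) ≤ 2 * D := by
    have := htri (φ (γ s)) m (φ (γ u))
    rw [SimpleGraph.dist_comm (u := m)] at this
    simp only [Function.comp_apply] at hsm hum
    linarith
  have hdist : dist (γ s) (γ u) ≤ lam * (2 * D + eps) := by
    rw [← div_le_iff₀' hlam, ← one_div_mul_eq_div]
    linarith [hφ₁ (γ s) (γ u)]
  have hs0 : |s - 0| ≤ K * (lam * (2 * D + eps) + C) := by
    have hK' := (hγ s trivial u trivial).1
    rw [← div_le_iff₀' hK, ← one_div_mul_eq_div]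
    have h0u : |s - 0| ≤ |s - u| := by
      rw [abs_of_nonpos (by linarith), abs_of_nonpos (by linarith)]
      linarith
    calc 1 / K * |s - 0| ≤ 1 / K * |s - u| := by gcongr
      _ ≤ lam * (2 * D + eps) + C := by linarith
  have hγs : dist (γ s) (γ 0) ≤ K * (K * (lam * (2 * D + eps) + C)) + C :=
    calc dist (γ s) (γ 0) ≤ K * |s - 0| + C := (hγ s trivial 0 trivial).2
      _ ≤ _ := by gcongr
  have hsw : (T.dist (φ (γ s)) (φ (γ 0)) : ℝ) ≤
      lam * (K * (K * (lam * (2 * D + eps) + C)) + C) + eps :=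
    (hφ₂ _ _).trans (by gcongr)
  have := htri (φ (γ 0)) (φ (γ s)) m
  rw [SimpleGraph.dist_comm (v := φ (γ s))] at this
  simp only [Function.comp_apply] at hsm
  linarith

theorem not_quasiTree_of_detours_general
    {X : Type} [MetricSpace X]
    (K C : ℝ) (hK : 1 ≤ K) (γ : ℝ → X)
    (hγ : IsQuasiGeodesicOn K C γ Set.univ)
    (t : ℕ → ℕ)
    (detour : ∀ i : ℕ, ∃ p : Path (γ (-(t i : ℝ))) (γ (t i : ℝ)),
      ∀ s : unitInterval, (i : ℝ) ≤ dist (p s) (γ 0)) :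
    ¬ IsQuasiTree X := by
  rintro ⟨V, T, hT, φ, lam, eps, hlam, -, hφ, -⟩
  have hlam₀ : 0 < lam := by linarith
  obtain ⟨R, hR⟩ := exists_dist_median_le_of_isQuasiGeodesicOn hT (by linarith) hlam₀ hγ
    (fun x y => (hφ x y).1) (fun x y => (hφ x y).2)
  obtain ⟨i, hi⟩ := exists_nat_gt (lam * (R + lam + 2 * eps))
  obtain ⟨p, hp⟩ := detour i
  obtain ⟨m, hab, haw, hwb⟩ :=
    hT.exists_median (φ (γ (-(t i : ℝ)))) (φ (γ (t i : ℝ))) (φ (γ 0))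
  have hwm := hR (t i) (Nat.cast_nonneg _) m haw hwb
  obtain ⟨s, hsm⟩ :=
    exists_dist_le_of_between_of_path hT hlam₀.le (fun x y => (hφ x y).2) p hab
  have hfar : (1 / lam) * i - eps ≤ T.dist (φ (p s)) (φ (γ 0)) :=
    le_trans (by gcongr; exact hp s) (hφ _ _).1
  have htri :
      (T.dist (φ (p s)) (φ (γ 0)) : ℝ) ≤ T.dist (φ (p s)) m + T.dist (φ (γ 0)) m := by
    rw [SimpleGraph.dist_comm (u := φ (γ 0))]
    exact_mod_cast hT.connected.dist_triangle
  have : (i : ℝ) ≤ lam * (R + lam + 2 * eps) := by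
    rw [← div_le_iff₀' hlam₀, ← one_div_mul_eq_div]
    linarith
  linarith

/-- Let `X` be a geodesic metric space.  Suppose there is a quasi-geodesic line
`γ : ℝ → X` and an increasing sequence `(t i)` of positive integers such that for each
`i`, `γ (-(t i))` and `γ (t i)` can be connected by a continuous path avoiding the ball
of radius `i` around `γ 0`.  Then `X` is not quasi-isometric to a simplicial tree. -/
theorem not_quasiTree_of_detours
    {X : Type} [MetricSpace X] (hgeo : IsGeodesicSpace X)
    (K C : ℝ) (hK : 1 ≤ K) (hC : 0 ≤ C) (γ : ℝ → X)
    (hγ : IsQuasiGeodesicOn K C γ Set.univ)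
    (t : ℕ → ℕ) (ht : StrictMono t) (htpos : ∀ i, 0 < t i)
    (detour : ∀ i : ℕ, ∃ p : Path (γ (-(t i : ℝ))) (γ (t i : ℝ)),
      ∀ s : unitInterval, (i : ℝ) ≤ dist (p s) (γ 0)) :
    ¬ IsQuasiTree X :=
  not_quasiTree_of_detours_general K C hK γ hγ t detour
end

section
/- Let X be a geodesic metric space quasi-isometric to a simplicial tree. Then for any K ≥ 1 and C ≥ 0 there exists Δ' ≥ 0 such that for any points x, y ∈ X, any (K,C)-quasi-geodesic segment γ from x to y, and any continuous path p from x to y, the image of γ is contained in the Δ'-neighborhood of the image of p. -/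
open SimpleGraph

/-- min is 1-Lipschitz in its first argument. -/
lemma min_lip (x y z : ℝ) : |min x z - min y z| ≤ |x - y| := by
  rcases le_total x z with h1 | h1 <;> rcases le_total y z with h2 | h2
  · rw [min_eq_left h1, min_eq_left h2]
  · rw [min_eq_left h1, min_eq_right h2]
    rw [abs_le]
    constructor <;> linarith [le_abs_self (x - y), neg_abs_le (x - y)]
  · rw [min_eq_right h1, min_eq_left h2]
    rw [abs_le]
    constructor <;> linarith [le_abs_self (x - y), neg_abs_le (x - y)]
  · rw [min_eq_right h1, min_eq_right h2]
    simp [abs_nonneg]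

/-- A chain with bounded jumps can be filled into a walk all of whose vertices are
within distance `D` of some chain point. -/
lemma chain_walk {V : Type} [DecidableEq V] {T : SimpleGraph V} (hc : T.Connected)
    (c : ℕ → V) (D : ℝ) (hD0 : 0 ≤ D)
    (hD : ∀ k, (T.dist (c k) (c (k + 1)) : ℝ) ≤ D) (n : ℕ) :
    ∃ W : T.Walk (c 0) (c n), ∀ x ∈ W.support, ∃ k ≤ n, (T.dist (c k) x : ℝ) ≤ D := by
  induction n with
  | zero =>
    refine ⟨Walk.nil, ?_⟩
    intro x hx
    simp only [Walk.support_nil, List.mem_singleton] at hx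
    subst hx
    exact ⟨0, le_refl _, by simp [SimpleGraph.dist_self, hD0]⟩
  | succ n ih =>
    obtain ⟨W, hW⟩ := ih
    obtain ⟨q, hq⟩ := hc.exists_walk_length_eq_dist (c n) (c (n + 1))
    refine ⟨W.append q, ?_⟩
    intro x hx
    rw [Walk.mem_support_append_iff] at hx
    rcases hx with hx | hx
    · obtain ⟨k, hk, hd⟩ := hW x hx
      exact ⟨k, hk.trans (Nat.le_succ n), hd⟩
    · refine ⟨n, Nat.le_succ n, ?_⟩
      have h1 : T.dist (c n) x ≤ (q.takeUntil x hx).length := SimpleGraph.dist_le _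
      have h2 : (q.takeUntil x hx).length ≤ q.length := Walk.length_takeUntil_le q hx
      have h3 : (T.dist (c n) x : ℝ) ≤ (T.dist (c n) (c (n + 1)) : ℝ) := by
        exact_mod_cast h1.trans (h2.trans_eq hq)
      exact h3.trans (hD n)

/-- Discrete intermediate value theorem along a walk. -/
lemma walk_ivt {V : Type} {T : SimpleGraph V} (hc : T.Connected) (c : ℕ → V)
    (n m : ℕ) (D J : ℝ)
    (hjump : ∀ i ≤ n, ∀ j ≤ n, (T.dist (c i) (c j) : ℝ) ≤ 2 * D + 1 → |(i : ℝ) - j| ≤ J) :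
    ∀ {u w : V} (W : T.Walk u w),
      (∀ x ∈ W.support, ∃ k ≤ n, (T.dist (c k) x : ℝ) ≤ D) →
      (∃ k ≤ n, k ≤ m ∧ (T.dist (c k) u : ℝ) ≤ D) →
      (∃ k ≤ n, m ≤ k ∧ (T.dist (c k) w : ℝ) ≤ D) →
      ∃ x ∈ W.support, ∃ k ≤ n, (T.dist (c k) x : ℝ) ≤ D ∧ |(k : ℝ) - m| ≤ J := by
  intro u w W
  induction W with
  | nil =>
    rename_i z
    intro _ hu hw
    obtain ⟨ku, hkun, hkum, hdu⟩ := hu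
    obtain ⟨kw, hkwn, hkwm, hdw⟩ := hw
    have tri : T.dist (c ku) (c kw) ≤ T.dist (c ku) z + T.dist z (c kw) :=
      hc.dist_triangle
    have hcomm : T.dist z (c kw) = T.dist (c kw) z := SimpleGraph.dist_comm
    have tri' : (T.dist (c ku) (c kw) : ℝ) ≤ 2 * D + 1 := by
      have h0 : (T.dist (c ku) (c kw) : ℝ) ≤ (T.dist (c ku) z : ℝ) + (T.dist (c kw) z : ℝ) := by
        rw [hcomm] at tri; exact_mod_cast tri
      linarith
    have hJ := hjump ku hkun kw hkwn tri'
    refine ⟨z, by simp, kw, hkwn, hdw, ?_⟩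
    have h1 : (ku : ℝ) ≤ m := by exact_mod_cast hkum
    have h2 : (m : ℝ) ≤ kw := by exact_mod_cast hkwm
    rw [abs_le] at hJ ⊢
    constructor <;> linarith
  | @cons uu vv ww hadj q ih =>
    intro hcov hu hw
    have hvvmem : vv ∈ (Walk.cons hadj q).support := by
      rw [Walk.support_cons]
      exact List.mem_cons_of_mem _ q.start_mem_support
    obtain ⟨k', hk'n, hd'⟩ := hcov vv hvvmem
    by_cases hcase : m ≤ k'
    · obtain ⟨ku, hkun, hkum, hdu⟩ := hu
      have hadj1 : (T.dist uu vv : ℝ) ≤ 1 := by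
        have h0 : T.dist uu vv ≤ (Walk.cons hadj (Walk.nil : T.Walk vv vv)).length :=
          SimpleGraph.dist_le _
        simp only [Walk.length_cons, Walk.length_nil] at h0
        exact_mod_cast h0
      have tri : T.dist (c ku) (c k') ≤ T.dist (c ku) uu + T.dist uu (c k') :=
        hc.dist_triangle
      have tri2 : T.dist uu (c k') ≤ T.dist uu vv + T.dist vv (c k') :=
        hc.dist_triangle
      have hcomm : T.dist vv (c k') = T.dist (c k') vv := SimpleGraph.dist_comm
      have tri' : (T.dist (c ku) (c k') : ℝ) ≤ 2 * D + 1 := by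
        have e1 : (T.dist (c ku) (c k') : ℝ) ≤ (T.dist (c ku) uu : ℝ) + (T.dist uu (c k') : ℝ) := by
          exact_mod_cast tri
        have e2 : (T.dist uu (c k') : ℝ) ≤ (T.dist uu vv : ℝ) + (T.dist (c k') vv : ℝ) := by
          rw [hcomm] at tri2; exact_mod_cast tri2
        linarith
      have hJ := hjump ku hkun k' hk'n tri'
      refine ⟨vv, hvvmem, k', hk'n, hd', ?_⟩
      have h1 : (ku : ℝ) ≤ m := by exact_mod_cast hkum
      have h2 : (m : ℝ) ≤ k' := by exact_mod_cast hcase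
      rw [abs_le] at hJ ⊢
      constructor <;> linarith
    · push_neg at hcase
      obtain ⟨x, hx, hres⟩ := ih
        (fun x hx => hcov x (by rw [Walk.support_cons]; exact List.mem_cons_of_mem _ hx))
        ⟨k', hk'n, hcase.le, hd'⟩ hw
      exact ⟨x, by rw [Walk.support_cons]; exact List.mem_cons_of_mem _ hx, hres⟩

set_option maxHeartbeats 2000000 in
/-- Let `X` be a geodesic metric space quasi-isometric to a simplicial tree.  Then for
any `K ≥ 1` and `C ≥ 0` there is `Δ' ≥ 0` such that for any points `x, y ∈ X`, any
`(K,C)`-quasi-geodesic segment from `x` to `y` and any continuous path `p` from `x` to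
`y`, the image of the quasi-geodesic is contained in the `Δ'`-neighborhood of the image
of `p`. -/
theorem quasiGeodesic_near_path_of_quasiTree
    {X : Type} [MetricSpace X] (hgeo : IsGeodesicSpace X) (hqt : IsQuasiTree X)
    (K C : ℝ) (hK : 1 ≤ K) (hC : 0 ≤ C) :
    ∃ Δ' : ℝ, 0 ≤ Δ' ∧
      ∀ (x y : X) (a b : ℝ) (γ : ℝ → X), a ≤ b → γ a = x → γ b = y →
        IsQuasiGeodesicOn K C γ (Set.Icc a b) →
          ∀ p : Path x y, ∀ s ∈ Set.Icc a b,
            ∃ u : unitInterval, dist (γ s) (p u) ≤ Δ' := by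
  classical
  obtain ⟨V, T, htree, φ, lam, eps, hlam, heps, hφ, -⟩ := hqt
  have hconn : T.Connected := htree.isConnected
  have hacyc : T.IsAcyclic := htree.IsAcyclic
  have hlam0 : (0:ℝ) < lam := lt_of_lt_of_le one_pos hlam
  have hK0 : (0:ℝ) < K := lt_of_lt_of_le one_pos hK
  set D : ℝ := lam * (K + C) + eps with hDdef
  set D' : ℝ := lam * 1 + eps with hD'def
  set J : ℝ := K * (lam * (2 * D + 1 + eps) + C) + 1 with hJdef
  have hD0 : 0 ≤ D := by
    have : 0 ≤ lam * (K + C) := mul_nonneg hlam0.le (by linarith)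
    linarith
  have hD'0 : 0 ≤ D' := by nlinarith
  have hJ0 : 0 ≤ J := by
    have : 0 ≤ K * (lam * (2 * D + 1 + eps) + C) :=
      mul_nonneg hK0.le (add_nonneg (mul_nonneg hlam0.le (by linarith)) hC)
    linarith
  set M : ℝ := D + (lam * (K * J + C) + eps) + D + D' with hMdef
  have hM0 : 0 ≤ M := by
    have : 0 ≤ lam * (K * J + C) :=
      mul_nonneg hlam0.le (add_nonneg (mul_nonneg hK0.le hJ0) hC)
    linarith
  refine ⟨lam * (M + eps), mul_nonneg hlam0.le (by linarith), ?_⟩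
  intro x y a b γ hab hγa hγb hqg p s hs
  set n : ℕ := ⌈b - a⌉₊ with hn
  set t : ℕ → ℝ := fun k => min (a + k) b with ht
  have htmem : ∀ k : ℕ, t k ∈ Set.Icc a b := by
    intro k
    refine ⟨le_min (le_add_of_nonneg_right (Nat.cast_nonneg k)) hab, min_le_right _ _⟩
  set c : ℕ → V := fun k => φ (γ (t k)) with hcdef
  -- upper bound on tree distances between points on γ
  have key1 : ∀ (r r' : ℝ), r ∈ Set.Icc a b → r' ∈ Set.Icc a b →
      (T.dist (φ (γ r)) (φ (γ r')) : ℝ) ≤ lam * (K * |r - r'| + C) + eps := by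
    intro r r' hr hr'
    have h1 := (hqg r hr r' hr').2
    have h2 := (hφ (γ r) (γ r')).2
    have h3 := mul_le_mul_of_nonneg_left h1 hlam0.le
    linarith
  -- lower bound: tree distance small forces parameters close
  have key2 : ∀ (r r' : ℝ), r ∈ Set.Icc a b → r' ∈ Set.Icc a b →
      ∀ A : ℝ, (T.dist (φ (γ r)) (φ (γ r')) : ℝ) ≤ A →
        |r - r'| ≤ K * (lam * (A + eps) + C) := by
    intro r r' hr hr' A hA
    have h1 := (hqg r hr r' hr').1
    have h2 := (hφ (γ r) (γ r')).1
    have hd1 : dist (γ r) (γ r') ≤ lam * (A + eps) := by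
      have h3 : (1/lam) * dist (γ r) (γ r') ≤ A + eps := by linarith
      calc dist (γ r) (γ r') = lam * ((1/lam) * dist (γ r) (γ r')) := by
            field_simp
        _ ≤ lam * (A + eps) := mul_le_mul_of_nonneg_left h3 hlam0.le
    have h4 : (1/K) * |r - r'| ≤ lam * (A + eps) + C := by linarith
    calc |r - r'| = K * ((1/K) * |r - r'|) := by field_simp
      _ ≤ K * (lam * (A + eps) + C) := mul_le_mul_of_nonneg_left h4 hK0.le
  have htlip : ∀ i j : ℕ, |t i - t j| ≤ |(i:ℝ) - j| := by
    intro i j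
    have h := min_lip (a + i) (a + j) b
    have e : (a + (i:ℝ)) - (a + (j:ℝ)) = (i:ℝ) - j := by ring
    rw [e] at h
    exact h
  have htrevbase : ∀ i j : ℕ, i ≤ j → j ≤ n → ((j:ℝ) - i) ≤ |t i - t j| + 1 := by
    intro i j hij hjn
    have hijR : (i:ℝ) ≤ j := Nat.cast_le.mpr hij
    have hmono : t i ≤ t j := min_le_min (by linarith) (le_refl b)
    have habs : |t i - t j| = t j - t i := by
      rw [abs_sub_comm, abs_of_nonneg (by linarith)]
    by_cases hcj : a + (j:ℝ) ≤ b
    · have hjeq : t j = a + j := min_eq_left hcj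
      have hieq : t i = a + i := min_eq_left (by linarith)
      rw [habs, hjeq, hieq]; linarith
    · push_neg at hcj
      have htj : t j = b := min_eq_right hcj.le
      have hjb : (j:ℝ) ≤ n := Nat.cast_le.mpr hjn
      have hceil : (n:ℝ) < (b - a) + 1 := Nat.ceil_lt_add_one (by linarith)
      by_cases hci : a + (i:ℝ) ≤ b
      · have hti : t i = a + i := min_eq_left hci
        rw [habs, htj, hti]; linarith
      · push_neg at hci
        have hti : t i = b := min_eq_right hci.le
        rw [habs, htj, hti]; linarith
  have htrev : ∀ i j : ℕ, i ≤ n → j ≤ n → |(i:ℝ) - j| ≤ |t i - t j| + 1 := by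
    intro i j hi hj
    rcases le_total i j with h | h
    · have hb := htrevbase i j h hj
      have : |(i:ℝ) - j| = (j:ℝ) - i := by
        rw [abs_sub_comm, abs_of_nonneg (by exact sub_nonneg.mpr (Nat.cast_le.mpr h))]
      rw [this]; exact hb
    · have hb := htrevbase j i h hi
      have e1 : |(i:ℝ) - j| = (i:ℝ) - j :=
        abs_of_nonneg (sub_nonneg.mpr (Nat.cast_le.mpr h))
      rw [e1, abs_sub_comm]; exact hb
  have hseg : ∀ k : ℕ, (T.dist (c k) (c (k+1)) : ℝ) ≤ D := by
    intro k
    have h1 := key1 (t k) (t (k+1)) (htmem k) (htmem (k+1))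
    have h2 : |t k - t (k+1)| ≤ 1 := by
      have h := htlip k (k+1)
      have e : |(k:ℝ) - ((k+1:ℕ):ℝ)| = 1 := by
        push_cast; rw [show (k:ℝ) - (k+1) = -1 by ring, abs_neg, abs_one]
      rw [e] at h; exact h
    have h3 : (T.dist (c k) (c (k+1)) : ℝ) ≤ lam * (K * |t k - t (k+1)| + C) + eps := h1
    nlinarith [mul_nonneg hlam0.le (mul_nonneg hK0.le (sub_nonneg.mpr h2))]
  have hjump : ∀ i ≤ n, ∀ j ≤ n,
      (T.dist (c i) (c j) : ℝ) ≤ 2 * D + 1 → |(i:ℝ) - j| ≤ J := by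
    intro i hi j hj hd
    have h1 := key2 (t i) (t j) (htmem i) (htmem j) _ hd
    have h2 := htrev i j hi hj
    rw [hJdef]; linarith
  set m : ℕ := ⌊s - a⌋₊ with hmdef
  have hmn : m ≤ n :=
    le_trans (Nat.floor_le_ceil _) (Nat.ceil_mono (by linarith [hs.2]))
  have hsa : (0:ℝ) ≤ s - a := by linarith [hs.1]
  have hmle : (m:ℝ) ≤ s - a := Nat.floor_le hsa
  have htm : t m = a + m := min_eq_left (by linarith [hs.2])
  have hstm : |s - t m| ≤ 1 := by
    rw [htm]
    have h2 := Nat.lt_floor_add_one (s - a)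
    rw [abs_le]; constructor <;> [linarith; linarith]
  have hvm : (T.dist (φ (γ s)) (c m) : ℝ) ≤ D := by
    have h1 := key1 s (t m) hs (htmem m)
    nlinarith [mul_nonneg hlam0.le (mul_nonneg hK0.le (sub_nonneg.mpr hstm))]
  -- the path chain
  have hucont : UniformContinuous (p : unitInterval → X) :=
    CompactSpace.uniformContinuous_of_continuous p.continuous
  obtain ⟨δ, hδ0, hδ⟩ := Metric.uniformContinuous_iff.mp hucont 1 one_pos
  obtain ⟨N, hN⟩ := exists_nat_gt (1/δ)
  have hN0 : (0:ℝ) < N := lt_trans (by positivity) hN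
  have hinvN : 1/(N:ℝ) < δ := by
    rw [div_lt_iff₀ hN0]
    rw [div_lt_iff₀ hδ0] at hN
    linarith [hN]
  set uu : ℕ → unitInterval := fun k => Set.projIcc 0 1 zero_le_one ((k:ℝ)/N) with huudef
  set c' : ℕ → V := fun k => φ (p (uu k)) with hc'def
  have hseg' : ∀ k : ℕ, (T.dist (c' k) (c' (k+1)) : ℝ) ≤ D' := by
    intro k
    have hlip := (LipschitzWith.projIcc (zero_le_one (α := ℝ))).dist_le_mul
      ((k:ℝ)/N) (((k+1:ℕ):ℝ)/N)
    have e : dist ((k:ℝ)/N) (((k+1:ℕ):ℝ)/N) = 1/N := by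
      rw [Real.dist_eq]
      push_cast
      rw [show (k:ℝ)/N - ((k:ℝ)+1)/N = -(1/N) by ring, abs_neg,
        abs_of_pos (by positivity)]
    have hdist : dist (uu k) (uu (k+1)) < δ := by
      have := hlip
      rw [e, NNReal.coe_one, one_mul] at this
      exact lt_of_le_of_lt this hinvN
    have hd1 : dist (p (uu k)) (p (uu (k+1))) < 1 := hδ hdist
    have h2 := (hφ (p (uu k)) (p (uu (k+1)))).2
    have h3 := mul_le_mul_of_nonneg_left hd1.le hlam0.le
    rw [hD'def]; linarith
  have huu0 : uu 0 = 0 := by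
    apply Subtype.ext
    simp [huudef, Set.projIcc]
  have huuN : uu N = 1 := by
    apply Subtype.ext
    simp [huudef, Set.projIcc, div_self hN0.ne']
  have hc'0 : c' 0 = c 0 := by
    simp only [hc'def, hcdef, huu0]
    rw [p.source]
    have e : t 0 = a := by
      simp only [ht]
      norm_num
      exact hab
    rw [e, hγa]
  have hc'N : c' N = c n := by
    simp only [hc'def, hcdef, huuN]
    rw [p.target]
    have e : t n = b := min_eq_right (by linarith [Nat.le_ceil (b - a)])
    rw [e, hγb]
  obtain ⟨Wγ, hWγ⟩ := chain_walk hconn c D hD0 hseg n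
  obtain ⟨Wp, hWp⟩ := chain_walk hconn c' D' hD'0 hseg' N
  have hpeq : Wγ.bypass = (Wp.copy hc'0 hc'N).bypass := by
    have h := hacyc.path_unique ⟨Wγ.bypass, Wγ.bypass_isPath⟩
      ⟨(Wp.copy hc'0 hc'N).bypass, (Wp.copy hc'0 hc'N).bypass_isPath⟩
    exact congrArg Subtype.val h
  have hsub1 : ∀ x' ∈ Wγ.bypass.support, ∃ k ≤ n, (T.dist (c k) x' : ℝ) ≤ D :=
    fun x' hx' => hWγ x' (Wγ.support_bypass_subset hx')
  have hsub2 : ∀ x' ∈ Wγ.bypass.support, x' ∈ Wp.support := by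
    intro x' hx'
    rw [hpeq] at hx'
    have h := (Wp.copy hc'0 hc'N).support_bypass_subset hx'
    rwa [Walk.support_copy] at h
  obtain ⟨x₀, hx₀, k, hkn, hdk, hkm⟩ := walk_ivt hconn c n m D J hjump Wγ.bypass hsub1
    ⟨0, Nat.zero_le n, Nat.zero_le m, by simp [SimpleGraph.dist_self, hD0]⟩
    ⟨n, le_refl n, hmn, by simp [SimpleGraph.dist_self, hD0]⟩
  obtain ⟨k', hk'N, hd'⟩ := hWp x₀ (hsub2 x₀ hx₀)
  refine ⟨uu k', ?_⟩
  have hmk : (T.dist (c m) (c k) : ℝ) ≤ lam * (K * J + C) + eps := by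
    have h1 := key1 (t m) (t k) (htmem m) (htmem k)
    have h2 : |t m - t k| ≤ J := by
      have hl := htlip m k
      have : |(m:ℝ) - k| ≤ J := by rwa [abs_sub_comm] at hkm
      linarith
    nlinarith [mul_nonneg hlam0.le (mul_nonneg hK0.le (sub_nonneg.mpr h2))]
  have tri : (T.dist (φ (γ s)) (c' k') : ℝ) ≤ M := by
    have t1 : T.dist (φ (γ s)) (c' k') ≤
        T.dist (φ (γ s)) (c m) + T.dist (c m) (c' k') :=
      hconn.dist_triangle
    have t2 : T.dist (c m) (c' k') ≤ T.dist (c m) (c k) + T.dist (c k) (c' k') :=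
      hconn.dist_triangle
    have t3 : T.dist (c k) (c' k') ≤ T.dist (c k) x₀ + T.dist x₀ (c' k') :=
      hconn.dist_triangle
    have hcm : T.dist x₀ (c' k') = T.dist (c' k') x₀ := SimpleGraph.dist_comm
    rw [hcm] at t3
    have e1 : (T.dist (φ (γ s)) (c' k') : ℝ) ≤
        (T.dist (φ (γ s)) (c m) : ℝ) + (T.dist (c m) (c k) : ℝ) +
        (T.dist (c k) x₀ : ℝ) + (T.dist (c' k') x₀ : ℝ) := by
      have h4 : T.dist (φ (γ s)) (c' k') ≤ T.dist (φ (γ s)) (c m) + T.dist (c m) (c k) +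
          T.dist (c k) x₀ + T.dist (c' k') x₀ := by omega
      exact_mod_cast h4
    rw [hMdef]
    linarith [hvm, hmk, hdk, hd']
  have h1 := (hφ (γ s) (p (uu k'))).1
  have h3 : (1/lam) * dist (γ s) (p (uu k')) ≤ M + eps := by linarith
  calc dist (γ s) (p (uu k')) = lam * ((1/lam) * dist (γ s) (p (uu k'))) := by
        field_simp
    _ ≤ lam * (M + eps) := mul_le_mul_of_nonneg_left h3 hlam0.le
end

section
/- Let G be a word-hyperbolic group and H an infinite quasi-convex subgroup of G. Then H has finite index in its commensurator Comm_G(H) = {g ∈ G : gHg⁻¹ ∩ H has finite index in both H and gHg⁻¹}. -/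
open Pointwise

/-- Word length of `g` with respect to a (symmetrized) generating set `S`. -/
noncomputable def wordLength {G : Type} [Group G] (S : Set G) (g : G) : ℕ :=
  sInf {n : ℕ | g ∈ (S ∪ S⁻¹) ^ n}

/-- The Gromov product (based at the identity) with respect to the word metric for `S`. -/
noncomputable def gromovProd {G : Type} [Group G] (S : Set G) (x y : G) : ℝ :=
  ((wordLength S x : ℝ) + (wordLength S y : ℝ) - (wordLength S (x⁻¹ * y) : ℝ)) / 2

/-- The word metric for `S` is `δ`-hyperbolic (Gromov four-point condition based at `1`). -/
def IsHyperbolicWith {G : Type} [Group G] (S : Set G) (δ : ℝ) : Prop :=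
  ∀ x y z : G, min (gromovProd S x y) (gromovProd S y z) - δ ≤ gromovProd S x z

/-- `g` lies on a geodesic from `1` to `h` in the Cayley graph of `(G, S)`. -/
def OnGeodesic {G : Type} [Group G] (S : Set G) (g h : G) : Prop :=
  wordLength S g + wordLength S (g⁻¹ * h) = wordLength S h

/-- `H` is `k`-quasi-convex with respect to `S`: every geodesic of the Cayley graph of
`(G,S)` between `1` and an element of `H` stays in the `k`-neighborhood of `H`. -/
def IsQuasiConvexWith {G : Type} [Group G] (S : Set G) (H : Subgroup G) (k : ℕ) : Prop :=
  ∀ h ∈ H, ∀ g : G, OnGeodesic S g h → ∃ h' ∈ H, wordLength S (g⁻¹ * h') ≤ k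

/-!
For `g ∈ Comm_G(H)` every point of `H` lies within some distance `t` (depending on `g`) of the
coset `g⁻¹H`. Being infinite and quasi-convex, `H` contains elements `a`, `b` much longer than `t`
with `⟨a, b⟩₁` at most the quasi-convexity constant, so a geodesic from `a` to `b` passes close
to `1`. Moving its far-away endpoints to nearby points of `g⁻¹H` moves this middle part only by
`O(δ)`, and quasi-convexity of `g⁻¹H` then yields a point of `g⁻¹H` whose distance to `1` does not
depend on `g`. Hence every coset of `H` in `Comm_G(H)` meets one fixed finite ball.
-/

section WordLength

variable {G : Type} [Group G] {S : Set G}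

theorem exists_mem_pow_of_closure_eq_top (hgen : Subgroup.closure S = ⊤) (g : G) :
    ∃ n, g ∈ (S ∪ S⁻¹) ^ n := by
  have hg : g ∈ (Subgroup.closure S).toSubmonoid := by rw [hgen]; trivial
  rw [Subgroup.closure_toSubmonoid] at hg
  induction hg using Submonoid.closure_induction with
  | mem x hx => exact ⟨1, by simpa using hx⟩
  | one => exact ⟨0, by simp⟩
  | mul x y _ _ hx hy =>
    obtain ⟨m, hm⟩ := hx
    obtain ⟨n, hn⟩ := hy
    exact ⟨m + n, pow_add (S ∪ S⁻¹) m n ▸ Set.mul_mem_mul hm hn⟩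

theorem wordLength_le_of_mem_pow {g : G} {n : ℕ} (hn : g ∈ (S ∪ S⁻¹) ^ n) :
    wordLength S g ≤ n :=
  Nat.sInf_le hn

theorem mem_pow_wordLength (hgen : Subgroup.closure S = ⊤) (g : G) :
    g ∈ (S ∪ S⁻¹) ^ wordLength S g :=
  Nat.sInf_mem (exists_mem_pow_of_closure_eq_top hgen g)

@[simp]
theorem wordLength_one : wordLength S (1 : G) = 0 :=
  Nat.le_zero.mp (wordLength_le_of_mem_pow (by simp))

theorem wordLength_inv (hgen : Subgroup.closure S = ⊤) (g : G) :
    wordLength S g⁻¹ = wordLength S g := by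
  have key : ∀ x : G, wordLength S x⁻¹ ≤ wordLength S x := fun x ↦ by
    have hx : x⁻¹ ∈ ((S ∪ S⁻¹) ^ wordLength S x)⁻¹ := Set.inv_mem_inv.mpr (mem_pow_wordLength hgen x)
    rw [← inv_pow, Set.union_inv, inv_inv, Set.union_comm] at hx
    exact wordLength_le_of_mem_pow hx
  exact le_antisymm (key g) (by simpa using key g⁻¹)

theorem wordLength_mul_le (hgen : Subgroup.closure S = ⊤) (x y : G) :
    wordLength S (x * y) ≤ wordLength S x + wordLength S y :=
  wordLength_le_of_mem_pow <|
    pow_add (S ∪ S⁻¹) _ _ ▸ Set.mul_mem_mul (mem_pow_wordLength hgen x) (mem_pow_wordLength hgen y)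

theorem wordLength_inv_mul_comm (hgen : Subgroup.closure S = ⊤) (x y : G) :
    wordLength S (x⁻¹ * y) = wordLength S (y⁻¹ * x) := by
  rw [← wordLength_inv hgen, mul_inv_rev, inv_inv]

theorem wordLength_inv_mul_le (hgen : Subgroup.closure S = ⊤) (x y z : G) :
    wordLength S (x⁻¹ * z) ≤ wordLength S (x⁻¹ * y) + wordLength S (y⁻¹ * z) := by
  simpa [mul_assoc] using wordLength_mul_le hgen (x⁻¹ * y) (y⁻¹ * z)

theorem wordLength_le_add_inv_mul (hgen : Subgroup.closure S = ⊤) (y z : G) :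
    wordLength S z ≤ wordLength S y + wordLength S (y⁻¹ * z) := by
  simpa using wordLength_inv_mul_le hgen 1 y z

theorem finite_setOf_wordLength_le (hgen : Subgroup.closure S = ⊤) (hS : S.Finite) (n : ℕ) :
    {g : G | wordLength S g ≤ n}.Finite := by
  have hpow : ∀ m : ℕ, ((S ∪ S⁻¹) ^ m).Finite := fun m ↦ by
    induction m with
    | zero => simp
    | succ m ih => rw [pow_succ]; exact ih.mul (hS.union hS.inv)
  refine ((Set.finite_le_nat n).biUnion fun m _ ↦ hpow m).subset fun g hg ↦ ?_
  exact Set.mem_biUnion (Set.mem_ofPred.mpr hg) (mem_pow_wordLength hgen g)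

theorem exists_mem_le_wordLength (hgen : Subgroup.closure S = ⊤) (hS : S.Finite)
    (H : Subgroup G) [Infinite H] (n : ℕ) : ∃ h ∈ H, n ≤ wordLength S h := by
  by_contra! hshort
  have : Finite H := Set.Finite.to_subtype <|
    (finite_setOf_wordLength_le hgen hS n).subset fun h hh ↦ (hshort h hh).le
  exact not_finite H

theorem onGeodesic_inv_mul_iff (x y q : G) :
    OnGeodesic S (x⁻¹ * q) (x⁻¹ * y) ↔
      wordLength S (x⁻¹ * q) + wordLength S (q⁻¹ * y) = wordLength S (x⁻¹ * y) := by
  simp [OnGeodesic, mul_assoc]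

theorem exists_wordLength_eq_onGeodesic (hgen : Subgroup.closure S = ⊤) (u : G) {i : ℕ}
    (hi : i ≤ wordLength S u) : ∃ p, wordLength S p = i ∧ OnGeodesic S p u := by
  have hu := mem_pow_wordLength hgen u
  rw [← Nat.add_sub_cancel' hi, pow_add] at hu
  obtain ⟨p, hp, r, hr, rfl⟩ := Set.mem_mul.mp hu
  have hp_le := wordLength_le_of_mem_pow hp
  have hr_le := wordLength_le_of_mem_pow hr
  have htri := wordLength_mul_le hgen p r
  refine ⟨p, by omega, ?_⟩
  rw [OnGeodesic, inv_mul_cancel_left]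
  omega

end WordLength

section GromovProduct

variable {G : Type} [Group G] {S : Set G}

theorem gromovProd_inv_mul (w x y : G) :
    gromovProd S (w⁻¹ * x) (w⁻¹ * y) =
      ((wordLength S (w⁻¹ * x) : ℝ) + wordLength S (w⁻¹ * y) - wordLength S (x⁻¹ * y)) / 2 := by
  simp [gromovProd, mul_assoc]

theorem gromovProd_comm (hgen : Subgroup.closure S = ⊤) (x y : G) :
    gromovProd S x y = gromovProd S y x := by
  rw [gromovProd, gromovProd, wordLength_inv_mul_comm hgen]
  ring

theorem sub_le_gromovProd (hgen : Subgroup.closure S = ⊤) (w x y : G) :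
    (wordLength S (w⁻¹ * y) : ℝ) - wordLength S (x⁻¹ * y) ≤ gromovProd S (w⁻¹ * x) (w⁻¹ * y) := by
  have htri : (wordLength S (w⁻¹ * y) : ℝ) ≤ wordLength S (w⁻¹ * x) + wordLength S (x⁻¹ * y) := by
    exact_mod_cast wordLength_inv_mul_le hgen w x y
  rw [gromovProd_inv_mul]
  linarith

theorem gromovProd_le_of_onGeodesic (hgen : Subgroup.closure S = ⊤) {x y q : G}
    (hq : OnGeodesic S (x⁻¹ * q) (x⁻¹ * y)) (w : G) :
    gromovProd S (w⁻¹ * x) (w⁻¹ * y) ≤ wordLength S (w⁻¹ * q) := by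
  rw [onGeodesic_inv_mul_iff] at hq
  have hx := wordLength_inv_mul_le hgen w q x
  have hy := wordLength_inv_mul_le hgen w q y
  rw [wordLength_inv_mul_comm hgen q x] at hx
  have hsum : (wordLength S (w⁻¹ * x) + wordLength S (w⁻¹ * y) : ℝ) ≤
      2 * wordLength S (w⁻¹ * q) + wordLength S (x⁻¹ * y) := by
    exact_mod_cast (by omega : _ ≤ 2 * wordLength S (w⁻¹ * q) + wordLength S (x⁻¹ * y))
  rw [gromovProd_inv_mul]
  linarith

theorem IsHyperbolicWith.nonneg {δ : ℝ} (hhyp : IsHyperbolicWith S δ) : 0 ≤ δ := by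
  simpa [gromovProd] using hhyp 1 1 1

theorem IsHyperbolicWith.min_le_gromovProd {δ : ℝ} (hhyp : IsHyperbolicWith S δ) (x y z w : G) :
    min (min (gromovProd S x y) (gromovProd S y z)) (gromovProd S z w) - 2 * δ ≤
      gromovProd S x w := by
  have hδ := hhyp.nonneg
  set m := min (min (gromovProd S x y) (gromovProd S y z)) (gromovProd S z w)
  have hm₁ : m ≤ min (gromovProd S x y) (gromovProd S y z) := min_le_left _ _
  have hm₂ : m ≤ gromovProd S z w := min_le_right _ _
  have : m - δ ≤ min (gromovProd S x z) (gromovProd S z w) :=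
    le_min (by linarith [hhyp x y z]) (by linarith)
  linarith [hhyp x z w]

theorem IsHyperbolicWith.exists_onGeodesic_wordLength_le (hgen : Subgroup.closure S = ⊤) {δ : ℝ}
    (hhyp : IsHyperbolicWith S δ) (w x y : G) :
    ∃ q, OnGeodesic S (x⁻¹ * q) (x⁻¹ * y) ∧
      (wordLength S (w⁻¹ * q) : ℝ) ≤ gromovProd S (w⁻¹ * x) (w⁻¹ * y) + 2 * δ + 1 := by
  set m₁ := wordLength S (w⁻¹ * x) with hm₁
  set m₂ := wordLength S (w⁻¹ * y) with hm₂
  set n := wordLength S (x⁻¹ * y) with hn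
  have h₁ : m₂ ≤ m₁ + n := wordLength_inv_mul_le hgen w x y
  have h₂ : m₁ ≤ m₂ + n := by
    have := wordLength_inv_mul_le hgen w y x
    rwa [wordLength_inv_mul_comm hgen y x] at this
  -- `q` is the point of the geodesic at distance `⌈⟨w, y⟩ₓ⌉ = ⌈(m₁ + n - m₂) / 2⌉` from `x`;
  -- hyperbolicity for `x, q, y` seen from `w` then bounds `d(w, q)`.
  set i := (m₁ + n - m₂ + 1) / 2
  obtain ⟨p, hp, hpg⟩ := exists_wordLength_eq_onGeodesic hgen (x⁻¹ * y) (i := i) (by omega)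
  refine ⟨x * p, by rwa [inv_mul_cancel_left], ?_⟩
  rw [OnGeodesic] at hpg
  have hpy : p⁻¹ * (x⁻¹ * y) = (x * p)⁻¹ * y := by group
  have hi : (m₁ + n : ℝ) ≤ 2 * i + m₂ ∧ (2 * i + m₂ : ℝ) ≤ m₁ + n + 1 := by
    constructor <;> norm_cast <;> omega
  have hpyR : (i + wordLength S ((x * p)⁻¹ * y) : ℝ) = n := by
    rw [← hpy, ← hp]; exact_mod_cast hpg
  have hhyp' := hhyp (w⁻¹ * x) (w⁻¹ * (x * p)) (w⁻¹ * y)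
  simp only [gromovProd_inv_mul, inv_mul_cancel_left, hp, ← hm₁, ← hm₂, ← hn] at hhyp' ⊢
  rw [min_eq_left (by linarith)] at hhyp'
  linarith

theorem IsHyperbolicWith.exists_onGeodesic_near (hgen : Subgroup.closure S = ⊤) {δ : ℝ}
    (hhyp : IsHyperbolicWith S δ) {x y x' y' q : G} {t : ℝ}
    (hq : OnGeodesic S (x⁻¹ * q) (x⁻¹ * y))
    (hx : (wordLength S (x'⁻¹ * x) : ℝ) ≤ t) (hy : (wordLength S (y'⁻¹ * y) : ℝ) ≤ t)
    (hqx : t + 2 * δ < wordLength S (q⁻¹ * x)) (hqy : t + 2 * δ < wordLength S (q⁻¹ * y)) :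
    ∃ r, OnGeodesic S (x'⁻¹ * r) (x'⁻¹ * y') ∧ (wordLength S (q⁻¹ * r) : ℝ) ≤ 4 * δ + 1 := by
  have hxy : gromovProd S (q⁻¹ * x) (q⁻¹ * y) ≤ 0 := by
    simpa using gromovProd_le_of_onGeodesic hgen hq q
  have hxx' : 2 * δ < gromovProd S (q⁻¹ * x) (q⁻¹ * x') := by
    rw [gromovProd_comm hgen]
    linarith [sub_le_gromovProd hgen q x' x]
  have hyy' : 2 * δ < gromovProd S (q⁻¹ * y') (q⁻¹ * y) := by
    linarith [sub_le_gromovProd hgen q y' y]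
  have hx'y' : gromovProd S (q⁻¹ * x') (q⁻¹ * y') ≤ 2 * δ := by
    by_contra! h
    have := hhyp.min_le_gromovProd (q⁻¹ * x) (q⁻¹ * x') (q⁻¹ * y') (q⁻¹ * y)
    linarith [lt_min (lt_min hxx' h) hyy']
  obtain ⟨r, hr, hqr⟩ := hhyp.exists_onGeodesic_wordLength_le hgen q x' y'
  exact ⟨r, hr, by linarith⟩

end GromovProduct

section QuasiConvex

variable {G : Type} [Group G] {S : Set G} {H : Subgroup G} {k : ℕ}

theorem IsQuasiConvexWith.exists_mem_wordLength_le (hqc : IsQuasiConvexWith S H k) {x y q : G}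
    (hxy : x⁻¹ * y ∈ H) (hq : OnGeodesic S (x⁻¹ * q) (x⁻¹ * y)) :
    ∃ h ∈ H, wordLength S (q⁻¹ * (x * h)) ≤ k := by
  obtain ⟨h, hH, hh⟩ := hqc _ hxy _ hq
  exact ⟨h, hH, by simpa [mul_assoc] using hh⟩

theorem IsQuasiConvexWith.exists_gromovProd_le (hgen : Subgroup.closure S = ⊤) (hS : S.Finite)
    [Infinite H] (hqc : IsQuasiConvexWith S H k) (M : ℕ) :
    ∃ a ∈ H, ∃ b ∈ H, M ≤ wordLength S a ∧ M ≤ wordLength S b ∧ gromovProd S a b ≤ k := by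
  obtain ⟨h, hH, hlong⟩ := exists_mem_le_wordLength hgen hS H (2 * M + 2 * k + 2)
  obtain ⟨p, hp, hph⟩ := exists_wordLength_eq_onGeodesic hgen h (i := M + k + 1) (by omega)
  obtain ⟨c, hcH, hpc⟩ := hqc h hH p hph
  -- `a = c⁻¹` and `b = c⁻¹ h` are the two halves of `h` as seen from `c`, which is close to
  -- the geodesic from `1` to `h`.
  refine ⟨c⁻¹, inv_mem hcH, c⁻¹ * h, mul_mem (inv_mem hcH) hH, ?_, ?_, ?_⟩
  · have := wordLength_le_add_inv_mul hgen c p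
    rw [wordLength_inv_mul_comm hgen] at this
    rw [wordLength_inv hgen]
    omega
  · have := wordLength_inv_mul_le hgen p c h
    rw [OnGeodesic] at hph
    omega
  · have hph' : OnGeodesic S (1⁻¹ * p) (1⁻¹ * h) := by simpa using hph
    calc gromovProd S c⁻¹ (c⁻¹ * h) = gromovProd S (c⁻¹ * 1) (c⁻¹ * h) := by rw [mul_one]
      _ ≤ wordLength S (c⁻¹ * p) := gromovProd_le_of_onGeodesic hgen hph' c
      _ ≤ k := by rw [wordLength_inv_mul_comm hgen]; exact_mod_cast hpc

end QuasiConvex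

section Cosets

variable {G : Type} [Group G] {H K : Subgroup G}

theorem Subgroup.exists_finite_inv_mul_mem_of_relIndex_conj_ne_zero {g : G}
    (hg : H.relIndex (ConjAct.toConjAct g • H) ≠ 0) :
    ∃ F : Set G, F.Finite ∧ ∀ a ∈ H, ∃ h ∈ H, h⁻¹ * (g * a) ∈ F := by
  set A := ConjAct.toConjAct g • H
  have : Finite (A ⧸ H.subgroupOf A) := Subgroup.index_ne_zero_iff_finite.mp hg
  refine ⟨Set.range fun c : A ⧸ H.subgroupOf A ↦ ((c.out : A) : G)⁻¹ * g, Set.finite_range _, ?_⟩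
  intro a ha
  have hA : g * a⁻¹ * g⁻¹ ∈ A := by
    rw [← ConjAct.toConjAct_smul]
    exact Subgroup.smul_mem_pointwise_smul _ _ H (inv_mem ha)
  -- `g a⁻¹ g⁻¹ ∈ gHg⁻¹` lies in `y (H ∩ gHg⁻¹)` for one of the finitely many representatives `y`.
  set c : A ⧸ H.subgroupOf A := QuotientGroup.mk ⟨_, hA⟩
  have hy : ((c.out : A) : G)⁻¹ * (g * a⁻¹ * g⁻¹) ∈ H := by
    simpa [Subgroup.mem_subgroupOf] using QuotientGroup.eq.mp (QuotientGroup.out_eq' c)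
  refine ⟨(((c.out : A) : G)⁻¹ * (g * a⁻¹ * g⁻¹))⁻¹, inv_mem hy, c, ?_⟩
  group

theorem Subgroup.relIndex_ne_zero_of_forall_exists_mul_mem {F : Set G} (hF : F.Finite)
    (hK : ∀ x ∈ K, ∃ h ∈ H, x * h ∈ F) : H.relIndex K ≠ 0 := by
  choose h hH hhF using hK
  have : Finite F := hF.to_subtype
  -- Two elements of `K` sent to the same point of `F` differ by an element of `H`.
  let f : K ⧸ H.subgroupOf K → F := fun c ↦
    ⟨c.out * h c.out c.out.2, hhF _ c.out.2⟩
  have hf : Function.Injective f := by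
    intro c₁ c₂ hc
    have hc' : (c₁.out : G) * h _ c₁.out.2 = c₂.out * h _ c₂.out.2 := congrArg Subtype.val hc
    rw [← QuotientGroup.out_eq' c₁, ← QuotientGroup.out_eq' c₂, QuotientGroup.eq,
      Subgroup.mem_subgroupOf]
    have : ((c₁.out⁻¹ * c₂.out : K) : G) = h _ c₁.out.2 * (h _ c₂.out.2)⁻¹ := by
      simp only [Subgroup.coe_mul, Subgroup.coe_inv]
      rw [inv_mul_eq_iff_eq_mul, ← mul_assoc, hc', mul_inv_cancel_right]
    rw [this]
    exact mul_mem (hH _ _) (inv_mem (hH _ _))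
  exact Subgroup.index_ne_zero_iff_finite.mpr (Finite.of_injective f hf)

end Cosets

theorem exists_mem_wordLength_inv_mul_le_of_relIndex_conj_ne_zero {G : Type} [Group G]
    {S : Set G} (hgen : Subgroup.closure S = ⊤) (hS : S.Finite) {δ : ℝ}
    (hhyp : IsHyperbolicWith S δ) {H : Subgroup G} [Infinite H] {k : ℕ}
    (hqc : IsQuasiConvexWith S H k) {g : G} (hg : H.relIndex (ConjAct.toConjAct g • H) ≠ 0) :
    ∃ h ∈ H, (wordLength S (g⁻¹ * h) : ℝ) ≤ 2 * k + 6 * δ + 2 := by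
  obtain ⟨F, hF, hgF⟩ := Subgroup.exists_finite_inv_mul_mem_of_relIndex_conj_ne_zero hg
  obtain ⟨t, ht⟩ := (hF.image (wordLength S)).bddAbove
  have hnear : ∀ a ∈ H, ∃ h ∈ H, (wordLength S ((g⁻¹ * h)⁻¹ * a) : ℝ) ≤ t := by
    intro a ha
    obtain ⟨h, hH, hhF⟩ := hgF a ha
    refine ⟨h, hH, ?_⟩
    rw [mul_inv_rev, inv_inv, mul_assoc]
    exact_mod_cast ht (Set.mem_image_of_mem _ hhF)
  obtain ⟨a, ha, b, hb, hMa, hMb, hab⟩ := hqc.exists_gromovProd_le hgen hS (t + k + ⌈4 * δ⌉₊ + 2)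
  obtain ⟨q, hq, hq1⟩ := hhyp.exists_onGeodesic_wordLength_le hgen 1 a b
  simp only [inv_one, one_mul] at hq1
  have hfar : ∀ z : G, t + k + ⌈4 * δ⌉₊ + 2 ≤ wordLength S z →
      (t : ℝ) + 2 * δ < wordLength S (q⁻¹ * z) := by
    intro z hz
    have hz' : (t + k + ⌈4 * δ⌉₊ + 2 : ℝ) ≤ wordLength S z := by exact_mod_cast hz
    have htri : (wordLength S z : ℝ) ≤ wordLength S q + wordLength S (q⁻¹ * z) := by
      exact_mod_cast wordLength_le_add_inv_mul hgen q z
    linarith [Nat.le_ceil (4 * δ)]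
  obtain ⟨a', ha', haa'⟩ := hnear a ha
  obtain ⟨b', hb', hbb'⟩ := hnear b hb
  obtain ⟨r, hr, hqr⟩ := hhyp.exists_onGeodesic_near hgen hq haa' hbb' (hfar a hMa) (hfar b hMb)
  obtain ⟨h, hH, hrh⟩ := hqc.exists_mem_wordLength_le
    (by simpa [mul_assoc] using mul_mem (inv_mem ha') hb') hr
  refine ⟨a' * h, mul_mem ha' hH, ?_⟩
  have hpath : g⁻¹ * (a' * h) = q * (q⁻¹ * r) * (r⁻¹ * (g⁻¹ * a' * h)) := by group
  have hrh' : (wordLength S (r⁻¹ * (g⁻¹ * a' * h)) : ℝ) ≤ k := by exact_mod_cast hrh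
  calc (wordLength S (g⁻¹ * (a' * h)) : ℝ)
      ≤ wordLength S q + wordLength S (q⁻¹ * r) + wordLength S (r⁻¹ * (g⁻¹ * a' * h)) := by
        rw [hpath]
        exact_mod_cast (wordLength_mul_le hgen _ _).trans
          (Nat.add_le_add_right (wordLength_mul_le hgen _ _) _)
    _ ≤ 2 * k + 6 * δ + 2 := by linarith

theorem finiteIndex_in_commensurator_of_quasiconvex_general
    {G : Type} [Group G] (H : Subgroup G) (hinf : Infinite H)
    (S : Finset G) (hgen : Subgroup.closure (S : Set G) = ⊤)
    (δ : ℝ) (hhyp : IsHyperbolicWith (S : Set G) δ)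
    (k : ℕ) (hqc : IsQuasiConvexWith (S : Set G) H k) :
    H.relIndex (Subgroup.Commensurable.commensurator H) ≠ 0 := by
  refine Subgroup.relIndex_ne_zero_of_forall_exists_mul_mem
    (finite_setOf_wordLength_le hgen S.finite_toSet (2 * k + ⌈6 * δ⌉₊ + 2)) fun x hx ↦ ?_
  have hx' : H.relIndex (ConjAct.toConjAct x⁻¹ • H) ≠ 0 :=
    ((Subgroup.Commensurable.commensurator_mem_iff H x⁻¹).mp (inv_mem hx)).2
  obtain ⟨h, hH, hxh⟩ :=
    exists_mem_wordLength_inv_mul_le_of_relIndex_conj_ne_zero hgen S.finite_toSet hhyp hqc hx'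
  refine ⟨h, hH, ?_⟩
  rw [inv_inv] at hxh
  have : (wordLength (S : Set G) (x * h) : ℝ) ≤ (2 * k + ⌈6 * δ⌉₊ + 2 : ℕ) := by
    push_cast
    linarith [Nat.le_ceil (6 * δ)]
  exact_mod_cast this

/-- Kapovich–Short: an infinite quasi-convex subgroup `H` of a word-hyperbolic group `G`
has finite index in its commensurator
`Comm_G(H) = {g : gHg⁻¹ ∩ H has finite index in both H and gHg⁻¹}`. -/
theorem finiteIndex_in_commensurator_of_quasiconvex
    {G : Type} [Group G] (H : Subgroup G) (hinf : Infinite H)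
    (S : Finset G) (hgen : Subgroup.closure (S : Set G) = ⊤)
    (δ : ℝ) (hδ : 0 ≤ δ) (hhyp : IsHyperbolicWith (S : Set G) δ)
    (k : ℕ) (hqc : IsQuasiConvexWith (S : Set G) H k) :
    H.relIndex (Subgroup.Commensurable.commensurator H) ≠ 0 :=
  finiteIndex_in_commensurator_of_quasiconvex_general H hinf S hgen δ hhyp k hqc
end

section
/- Let G be a group, F a finite-index normal subgroup, and H a subgroup of G such that for all g ∈ G \ H the intersection gHg⁻¹ ∩ H is finite (H is almost malnormal), with H virtually cyclic and infinite, and F free. Then F ∩ H is a maximal cyclic subgroup of F. -/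
/-- A group is virtually cyclic if it has a cyclic subgroup of finite index. -/
def IsVirtuallyCyclic (G : Type) [Group G] : Prop :=
  ∃ H : Subgroup G, IsCyclic H ∧ H.FiniteIndex

/-- A subgroup `H ≤ G` is almost malnormal if `gHg⁻¹ ∩ H` is finite for every `g ∉ H`. -/
def IsAlmostMalnormal {G : Type} [Group G] (H : Subgroup G) : Prop :=
  ∀ g : G, g ∉ H → (((fun x => g * x * g⁻¹) '' (H : Set G)) ∩ (H : Set G)).Finite

/-- A subgroup is maximal cyclic if it is cyclic and not properly contained in any
cyclic subgroup. -/
def IsMaximalCyclic {G : Type} [Group G] (M : Subgroup G) : Prop :=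
  (∃ g, M = Subgroup.zpowers g) ∧
    ∀ g : G, M ≤ Subgroup.zpowers g → M = Subgroup.zpowers g

/-!
`F ⊓ H` is free by Nielsen–Schreier and virtually cyclic because it embeds in `H`. In a free
group in which every element has a nonzero power in one cyclic subgroup `⟨c⟩`, two distinct basis
elements cannot exist (compare exponent sums), so `F ⊓ H` is cyclic. If `F ⊓ H ≤ ⟨w⟩` with
`w ∈ F`, pick `h ∈ F ⊓ H` of infinite order, say `h = w ^ k`. Then `w` commutes with `h`, so
`wHw⁻¹ ∩ H` contains every power of `h` and is infinite; almost malnormality forces `w ∈ H`.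
-/

open Subgroup

lemma IsVirtuallyCyclic.of_injective {X Y : Type} [Group X] [Group Y] (hY : IsVirtuallyCyclic Y)
    (f : X →* Y) (hf : Function.Injective f) : IsVirtuallyCyclic X := by
  obtain ⟨C, hC, hCfin⟩ := hY
  refine ⟨C.comap f, isCyclic_of_injective (f.subgroupComap C) fun a b hab => ?_, ?_⟩
  · exact Subtype.ext (hf (congrArg Subtype.val hab))
  · rw [finiteIndex_iff, index_comap]
    exact mt index_eq_zero_of_relIndex_eq_zero hCfin.index_ne_zero

lemma IsVirtuallyCyclic.exists_not_isOfFinOrder {X : Type} [Group X] [Infinite X]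
    (hX : IsVirtuallyCyclic X) : ∃ x : X, ¬IsOfFinOrder x := by
  obtain ⟨C, hC, hCfin⟩ := hX
  have : Infinite C := not_finite_iff_infinite.mp fun hfin =>
    have := (finite_iff_finite_and_finiteIndex C).mpr ⟨hfin, hCfin⟩
    not_finite X
  obtain ⟨c, hc⟩ := IsCyclic.exists_generator (α := C)
  refine ⟨c, ?_⟩
  rw [← orderOf_eq_zero_iff, orderOf_coe, orderOf_eq_card_of_forall_mem_zpowers hc]
  exact Nat.card_eq_zero_of_infinite

lemma IsAlmostMalnormal.mem_of_commute {G : Type} [Group G] {H : Subgroup G}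
    (hH : IsAlmostMalnormal H) {h w : G} (hh : h ∈ H) (hinf : ¬IsOfFinOrder h)
    (hwh : Commute w h) : w ∈ H := by
  by_contra hw
  refine Set.infinite_range_of_injective (injective_zpow_iff_not_isOfFinOrder.mpr hinf)
    ((hH w hw).subset ?_)
  rintro _ ⟨k, rfl⟩
  refine ⟨⟨h ^ k, zpow_mem hh k, ?_⟩, zpow_mem hh k⟩
  simp only [(hwh.zpow_right k).eq, mul_inv_cancel_right]

namespace FreeGroup

lemma subsingleton_of_forall_exists_pow_mem_zpowers {ι : Type*} (c : FreeGroup ι)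
    (hc : ∀ x : FreeGroup ι, ∃ n : ℕ, 0 < n ∧ x ^ n ∈ zpowers c) : Subsingleton ι := by
  classical
  let expSum (i : ι) (x : FreeGroup ι) : ℤ :=
    (lift (Pi.mulSingle i (Multiplicative.ofAdd 1)) x).toAdd
  have expSum_zpow (i : ι) (x : FreeGroup ι) (k : ℤ) : expSum i (x ^ k) = k * expSum i x := by
    simp [expSum, toAdd_zpow]
  have expSum_of (i j : ι) : expSum i (of j) = if j = i then 1 else 0 := by
    by_cases h : j = i <;> simp [expSum, h]
  have pow_eq_zpow (j : ι) : ∃ n : ℕ, 0 < n ∧ ∃ p : ℤ, c ^ p = of j ^ (n : ℤ) := by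
    obtain ⟨n, hn, p, hp⟩ := hc (of j)
    exact ⟨n, hn, p, by rw [zpow_natCast]; exact hp⟩
  refine ⟨fun i j => by_contra fun hij => ?_⟩
  obtain ⟨n, hn, p, hp⟩ := pow_eq_zpow i
  obtain ⟨m, hm, q, hq⟩ := pow_eq_zpow j
  have h1 := congrArg (expSum i) hp
  have h2 := congrArg (expSum i) hq
  have h3 := congrArg (expSum j) hq
  simp only [expSum_zpow, expSum_of, if_neg (Ne.symm hij), if_pos] at h1 h2 h3
  have hci : expSum i c ≠ 0 := fun h => by simp [h] at h1; omega
  have hq : q = 0 := by simpa [hci] using h2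
  simp [hq] at h3
  omega

lemma isCyclic_of_subsingleton {ι : Type*} [Subsingleton ι] : IsCyclic (FreeGroup ι) := by
  cases isEmpty_or_nonempty ι with
  | inl _ => infer_instance
  | inr h =>
    have : Unique ι := uniqueOfSubsingleton h.some
    infer_instance

lemma isCyclic_of_isVirtuallyCyclic {ι : Type} (h : IsVirtuallyCyclic (FreeGroup ι)) :
    IsCyclic (FreeGroup ι) := by
  obtain ⟨C, hC, hCfin⟩ := h
  obtain ⟨c, rfl⟩ := (C.isCyclic_iff_exists_zpowers_eq_top).mp hC
  have := subsingleton_of_forall_exists_pow_mem_zpowers c fun x =>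
    have ⟨n, hn, _, hx⟩ := exists_pow_mem_of_index_ne_zero hCfin.index_ne_zero x
    ⟨n, hn, hx⟩
  exact FreeGroup.isCyclic_of_subsingleton

end FreeGroup

lemma IsFreeGroup.isCyclic_of_isVirtuallyCyclic {X : Type} [Group X] [IsFreeGroup X]
    (h : IsVirtuallyCyclic X) : IsCyclic X :=
  have := FreeGroup.isCyclic_of_isVirtuallyCyclic
    (h.of_injective (toFreeGroup X).symm.toMonoidHom (toFreeGroup X).symm.injective)
  isCyclic_of_surjective (toFreeGroup X).symm (toFreeGroup X).symm.surjective

theorem inter_maximal_cyclic_of_almost_malnormal_general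
    {G : Type} [Group G] (F H : Subgroup G)
    (hFI : F.FiniteIndex) (hFfree : IsFreeGroup F)
    (hmal : IsAlmostMalnormal H) (hvc : IsVirtuallyCyclic H) (hinf : Infinite H) :
    IsMaximalCyclic ((F ⊓ H).subgroupOf F) := by
  set M := (F ⊓ H).subgroupOf F
  have hMvc : IsVirtuallyCyclic M := hvc.of_injective
    ((inclusion inf_le_right).comp (subgroupOfEquivOfLe inf_le_left).toMonoidHom)
    (by simpa only [MonoidHom.coe_comp, MulEquiv.coe_toMonoidHom] using
      (inclusion_injective _).comp (subgroupOfEquivOfLe _).injective)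
  obtain ⟨g, hg⟩ := (M.isCyclic_iff_exists_zpowers_eq_top).mp
    (IsFreeGroup.isCyclic_of_isVirtuallyCyclic hMvc)
  refine ⟨⟨g, hg.symm⟩, fun w hw => le_antisymm hw ?_⟩
  obtain ⟨h, hh⟩ := hvc.exists_not_isOfFinOrder
  obtain ⟨n, hn, -, hnF⟩ := exists_pow_mem_of_index_ne_zero hFI.index_ne_zero (h : G)
  have hnM : (⟨h ^ n, hnF⟩ : F) ∈ M := mem_subgroupOf.mpr ⟨hnF, pow_mem h.2 n⟩
  obtain ⟨k, hk⟩ := mem_zpowers_iff.mp (hw hnM)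
  have hhn : ¬IsOfFinOrder ((h : G) ^ n) := by
    rw [isOfFinOrder_pow, Submonoid.isOfFinOrder_coe (H := H.toSubmonoid) (x := h)]
    exact fun h' => h'.elim hh hn.ne'
  have hwk : (w : G) ^ k = (h : G) ^ n := congrArg Subtype.val hk
  have hwH : (w : G) ∈ H :=
    hmal.mem_of_commute (pow_mem h.2 n) hhn (hwk ▸ (Commute.refl _).zpow_right k)
  exact zpowers_le.mpr (mem_subgroupOf.mpr ⟨w.2, hwH⟩)

/-- Let `G` be a group, `F` a finite-index normal free subgroup and `H` an infinite,
virtually cyclic, almost malnormal subgroup of `G`.  Then `F ∩ H` is a maximal cyclic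
subgroup of `F`. -/
theorem inter_maximal_cyclic_of_almost_malnormal
    {G : Type} [Group G] (F H : Subgroup G)
    (hFN : F.Normal) (hFI : F.FiniteIndex) (hFfree : IsFreeGroup F)
    (hmal : IsAlmostMalnormal H) (hvc : IsVirtuallyCyclic H) (hinf : Infinite H) :
    IsMaximalCyclic ((F ⊓ H).subgroupOf F) :=
  inter_maximal_cyclic_of_almost_malnormal_general F H hFI hFfree hmal hvc hinf
end

section
/- In G = ⟨r, s | r³ = s² = 1⟩ with normal free subgroup F = ⟨srsr², sr²sr⟩ of rank 2, conjugation by sr induces an automorphism of the abelianization F^ab ≅ ℤ², and the induced action on the set of lines through the origin in ℚ² has all orbits of size exactly 3 (for lines arising from nontrivial elements). -/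
/-- The relators `r³` and `s²` (with `r = FreeGroup.of true`, `s = FreeGroup.of false`). -/
def modRels : Set (FreeGroup Bool) :=
  {(FreeGroup.of true) ^ 3, (FreeGroup.of false) ^ 2}

/-- The group `G = ⟨r, s ∣ r³ = s² = 1⟩ ≅ ℤ/2 * ℤ/3`. -/
abbrev ModGroup : Type := PresentedGroup modRels

/-- `r`. -/
def rr : ModGroup := PresentedGroup.of true
/-- `s`. -/
def ss : ModGroup := PresentedGroup.of false

/-- The subgroup `F = ⟨ s r s r², s r² s r ⟩`. -/
def modF : Subgroup ModGroup :=
  Subgroup.closure {ss * rr * ss * rr ^ 2, ss * rr ^ 2 * ss * rr}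

/-- The endomorphism of the abelianization `F^ab` induced by conjugation by `s r`. -/
noncomputable def conjAb (hN : modF.Normal) :
    Abelianization modF →* Abelianization modF :=
  Abelianization.map (@MulAut.conjNormal ModGroup _ modF hN (ss * rr)).toMonoidHom

/-- Two elements of an abelian group span the same line (over ℚ) if they have equal
nonzero powers. -/
def SameLine {A : Type} [CommGroup A] (x y : A) : Prop :=
  ∃ m n : ℤ, m ≠ 0 ∧ n ≠ 0 ∧ x ^ m = y ^ n

/-!
Let `r` act on `ℤ²` as a rotation of order 3 about the origin and `s` as the point
reflection in `(1/2, 0)`. Then `F` acts by translations, `a = s r s r²` and `b = s r² s r`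
translating by `(1, -1)` and `(2, 1)`; these are independent, so `F^ab` is free on `a, b`.
Conjugation by `s r` sends `a ↦ a b⁻¹` and `b ↦ a`, so `c := conjAb` satisfies `c² = c - 1`.
Hence `c³ = -1`, while `c` and `c² = -c⁻¹`, with characteristic polynomials `X² - X + 1` and
`X² + X + 1`, have no rational eigenvalue: neither of them fixes a line.
-/

open Abelianization

section QuadraticEndomorphism

variable {A : Type} [CommGroup A] {f : A →* A}

theorem zpow_eq_one_of_map_zpow_eq_zpow {t d : ℤ} (hf : ∀ x, f (f x) = f x ^ t / x ^ d)
    {m n : ℤ} {x : A} (h : f x ^ m = x ^ n) : x ^ (n ^ 2 - t * m * n + d * m ^ 2) = 1 := by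
  set v := Additive.ofMul x
  set w := Additive.ofMul (f x)
  have h₁ : m • w = n • v := congrArg Additive.ofMul h
  have h₂ : m • (t • w - d • v) = n • w := by
    simpa only [map_zpow, hf, ofMul_div, ofMul_zpow] using
      congrArg (fun y => Additive.ofMul (f y)) h
  have : (n ^ 2 - t * m * n + d * m ^ 2) • v = 0 := by
    linear_combination (norm := module) (m * t - n) • h₁ - m • h₂
  exact congrArg Additive.toMul this

theorem not_sameLine_map_self [IsMulTorsionFree A] {t d : ℤ}
    (hf : ∀ x, f (f x) = f x ^ t / x ^ d) (hdisc : t ^ 2 < 4 * d) {x : A} (hx : x ≠ 1) :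
    ¬ SameLine (f x) x := by
  rintro ⟨m, n, hm, -, h⟩
  have hq := (IsMulTorsionFree.zpow_eq_one_iff_right hx).1 (zpow_eq_one_of_map_zpow_eq_zpow hf h)
  -- `4 (n² - t m n + d m²) = (2 n - t m)² + (4 d - t²) m² > 0`
  nlinarith [sq_nonneg (2 * n - t * m), mul_pos (sub_pos.2 hdisc) (pow_pos (abs_pos.2 hm) 2),
    sq_abs m]

variable (hf : ∀ x, f (f x) = f x / x)
include hf

theorem map_map_map_eq_inv (x : A) : f (f (f x)) = x⁻¹ := by
  rw [hf (f x), hf x, div_div_cancel_left]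

theorem injective_of_map_map_eq_div : Function.Injective f := by
  refine (injective_iff_map_eq_one f).2 fun x hx => ?_
  simpa [hx] using (hf x).symm

theorem not_sameLine_map_of_map_map_eq_div [IsMulTorsionFree A] {x : A} (hx : x ≠ 1) :
    ¬ SameLine (f x) x :=
  not_sameLine_map_self (t := 1) (d := 1) (fun y => by rw [hf, zpow_one, zpow_one])
    (by norm_num) hx

theorem not_sameLine_map_map_of_map_map_eq_div [IsMulTorsionFree A] {x : A} (hx : x ≠ 1) :
    ¬ SameLine (f (f x)) x := by
  refine not_sameLine_map_self (f := f.comp f) (t := -1) (d := 1) (fun y => ?_) (by norm_num) hx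
  rw [MonoidHom.comp_apply, MonoidHom.comp_apply, map_map_map_eq_inv hf, hf y, zpow_neg_one,
    zpow_one, inv_div, div_div_cancel_left]

end QuadraticEndomorphism

theorem conj_mul_eq_of_pow_three_eq_one_of_sq_eq_one {H : Type*} [Group H] {r s : H}
    (hr : r ^ 3 = 1) (hs : s ^ 2 = 1) :
    (s * r) * (s * r * s * r ^ 2) * (s * r)⁻¹ = s * r * s * r ^ 2 * (s * r ^ 2 * s * r)⁻¹ ∧
      (s * r) * (s * r ^ 2 * s * r) * (s * r)⁻¹ = s * r * s * r ^ 2 := by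
  have hr₁ : r * (r * r) = 1 := by rw [← sq, ← pow_succ', hr]
  have hs₁ : s * s = 1 := by rw [← sq, hs]
  have hr₂ (x : H) : r * (r * (r * x)) = x := by
    rw [← mul_assoc, ← mul_assoc, mul_assoc r, hr₁, one_mul]
  constructor <;>
  simp only [mul_inv_rev, inv_eq_of_mul_eq_one_right hr₁, inv_eq_of_mul_eq_one_right hs₁, sq,
    mul_assoc, hr₁, hs₁, hr₂, mul_one]

theorem rr_pow_three : rr ^ 3 = 1 := by
  rw [rr, PresentedGroup.of, ← map_pow]
  exact PresentedGroup.one_of_mem (Set.mem_insert _ _)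

theorem ss_sq : ss ^ 2 = 1 := by
  rw [ss, PresentedGroup.of, ← map_pow]
  exact PresentedGroup.one_of_mem (Set.mem_insert_of_mem _ rfl)

def genA : modF := ⟨ss * rr * ss * rr ^ 2, Subgroup.subset_closure (by simp)⟩

def genB : modF := ⟨ss * rr ^ 2 * ss * rr, Subgroup.subset_closure (by simp)⟩

def orderThreeRotation : Equiv.Perm (ℤ × ℤ) where
  toFun p := (-p.2, p.1 - p.2)
  invFun p := (p.2 - p.1, -p.1)
  left_inv p := by ext <;> simp
  right_inv p := by ext <;> simp

theorem orderThreeRotation_pow_three : orderThreeRotation ^ 3 = 1 := by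
  ext p <;> simp [pow_succ, orderThreeRotation]; ring

theorem subLeft_sq {G : Type*} [AddCommGroup G] (a : G) : Equiv.subLeft a ^ 2 = 1 := by
  ext p
  simp [sq, sub_sub_cancel]

def affineRep : ModGroup →* Equiv.Perm (ℤ × ℤ) :=
  PresentedGroup.toGroup (f := fun b => if b then orderThreeRotation else .subLeft (1, 0)) <| by
    rintro _ (rfl | rfl)
    · simpa using orderThreeRotation_pow_three
    · simpa using subLeft_sq _

abbrev translation : Multiplicative (ℤ × ℤ) →* Equiv.Perm (ℤ × ℤ) :=
  MulAction.toPermHom (Multiplicative (ℤ × ℤ)) (ℤ × ℤ)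

theorem affineRep_genA : affineRep genA = translation (.ofAdd (1, -1)) := by
  ext p <;> simp [genA, affineRep, rr, ss, sq, orderThreeRotation]; ring

theorem affineRep_genB : affineRep genB = translation (.ofAdd (2, 1)) := by
  ext p <;> simp [genB, affineRep, rr, ss, sq, orderThreeRotation] <;> ring

theorem translation_apply (v : Multiplicative (ℤ × ℤ)) (p : ℤ × ℤ) :
    translation v p = v.toAdd + p :=
  rfl

theorem translation_injective : Function.Injective translation := fun v w h =>
  Multiplicative.toAdd.injective <| by
    simpa only [translation_apply, add_zero] using Equiv.congr_fun h 0

theorem affineRep_mem_range_translation {g : ModGroup} (hg : g ∈ modF) :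
    affineRep g ∈ translation.range := by
  suffices modF ≤ translation.range.comap affineRep from this hg
  rw [modF, Subgroup.closure_le]
  rintro _ (rfl | rfl)
  · exact ⟨_, affineRep_genA.symm⟩
  · exact ⟨_, affineRep_genB.symm⟩

noncomputable def translationVector : modF →* Multiplicative (ℤ × ℤ) :=
  (MonoidHom.ofInjective translation_injective).symm.toMonoidHom.comp <|
    (affineRep.comp modF.subtype).codRestrict _ fun g => affineRep_mem_range_translation g.2

theorem translationVector_eq {g : modF} {v : Multiplicative (ℤ × ℤ)}
    (h : affineRep g = translation v) : translationVector g = v := by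
  rw [translationVector, MonoidHom.comp_apply, MulEquiv.coe_toMonoidHom, MulEquiv.symm_apply_eq]
  ext1
  rw [MonoidHom.ofInjective_apply]
  exact h

theorem translationVector_genA : translationVector genA = .ofAdd (1, -1) :=
  translationVector_eq affineRep_genA

theorem translationVector_genB : translationVector genB = .ofAdd (2, 1) :=
  translationVector_eq affineRep_genB

theorem closure_genA_genB : Subgroup.closure {genA, genB} = ⊤ := by
  have : ({genA, genB} : Set modF) =
      (↑) ⁻¹' {ss * rr * ss * rr ^ 2, ss * rr ^ 2 * ss * rr} := by
    ext g
    simp [genA, genB, Subtype.ext_iff]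
  rw [this]
  exact Subgroup.closure_closure_coe_preimage

theorem closure_of_genA_of_genB : Subgroup.closure {of genA, of genB} = ⊤ := by
  rw [← Set.image_pair, ← MonoidHom.map_closure, closure_genA_genB,
    Subgroup.map_top_of_surjective]
  exact QuotientGroup.mk_surjective

section Conjugation

variable (hN : modF.Normal)

theorem conjAb_of_genA : conjAb hN (of genA) = of genA * (of genB)⁻¹ := by
  rw [conjAb, map_of, ← map_inv, ← map_mul]
  congr 1
  exact Subtype.ext (conj_mul_eq_of_pow_three_eq_one_of_sq_eq_one rr_pow_three ss_sq).1

theorem conjAb_of_genB : conjAb hN (of genB) = of genA := by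
  rw [conjAb, map_of]
  congr 1
  exact Subtype.ext (conj_mul_eq_of_pow_three_eq_one_of_sq_eq_one rr_pow_three ss_sq).2

theorem conjAb_conjAb (x : Abelianization modF) : conjAb hN (conjAb hN x) = conjAb hN x / x := by
  suffices (conjAb hN).comp (conjAb hN) = conjAb hN / MonoidHom.id _ from
    DFunLike.congr_fun this x
  refine MonoidHom.eq_of_eqOn_dense closure_of_genA_of_genB ?_
  rintro _ (rfl | rfl) <;> simp [conjAb_of_genA, conjAb_of_genB, div_eq_mul_inv]

theorem conjAb_bijective : Function.Bijective (conjAb hN) :=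
  (@MulAut.conjNormal _ _ modF hN (ss * rr)).abelianizationCongr.bijective

end Conjugation

def zpowPairHom {A : Type*} [CommGroup A] (a b : A) : Multiplicative (ℤ × ℤ) →* A where
  toFun v := a ^ v.toAdd.1 * b ^ v.toAdd.2
  map_one' := by simp
  map_mul' v w := by simp only [toAdd_mul, Prod.fst_add, Prod.snd_add, zpow_add, mul_mul_mul_comm]

theorem zpowPairHom_surjective {A : Type*} [CommGroup A] {a b : A}
    (h : Subgroup.closure {a, b} = ⊤) : Function.Surjective (zpowPairHom a b) := by
  rw [← MonoidHom.range_eq_top, eq_top_iff, ← h, Subgroup.closure_le]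
  rintro _ (rfl | rfl)
  · exact ⟨.ofAdd (1, 0), by simp [zpowPairHom]⟩
  · exact ⟨.ofAdd (0, 1), by simp [zpowPairHom]⟩

theorem zpowPairHom_genA_genB_injective :
    Function.Injective (zpowPairHom (of genA) (of genB)) := by
  intro v w h
  have := congrArg (lift translationVector) h
  simp only [zpowPairHom, MonoidHom.coe_mk, OneHom.coe_mk, map_mul, map_zpow, lift_apply_of,
    translationVector_genA, translationVector_genB] at this
  obtain ⟨h₁, h₂⟩ := Prod.ext_iff.1 (congrArg Multiplicative.toAdd this)
  simp only [toAdd_mul, toAdd_zpow, toAdd_ofAdd, Prod.fst_add, Prod.snd_add, Prod.smul_fst,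
    Prod.smul_snd, smul_eq_mul] at h₁ h₂
  exact Multiplicative.toAdd.injective (Prod.ext (by omega) (by omega))

noncomputable def abelianizationEquiv : Abelianization modF ≃* Multiplicative (ℤ × ℤ) :=
  (MulEquiv.ofBijective _
    ⟨zpowPairHom_genA_genB_injective, zpowPairHom_surjective closure_of_genA_of_genB⟩).symm

instance : IsMulTorsionFree (Abelianization modF) :=
  Function.Injective.isMulTorsionFree abelianizationEquiv.toMonoidHom abelianizationEquiv.injective

/-- Conjugation by `s r` induces an automorphism of the abelianization `F^ab ≅ ℤ²` of
the normal free subgroup `F = ⟨ s r s r², s r² s r ⟩ ≤ ⟨r, s ∣ r³ = s² = 1⟩`, and the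
induced action on the set of lines through the origin of `ℚ²` has all orbits of size
exactly 3 (for lines coming from nontrivial elements). -/
theorem conj_action_on_lines_has_orbits_of_size_three (hN : modF.Normal) :
    Function.Bijective (conjAb hN) ∧
      Nonempty (Abelianization modF ≃* Multiplicative (ℤ × ℤ)) ∧
      ∀ x : Abelianization modF, x ≠ 1 →
        SameLine (conjAb hN (conjAb hN (conjAb hN x))) x ∧
        ¬ SameLine (conjAb hN x) x ∧
        ¬ SameLine (conjAb hN (conjAb hN x)) x ∧
        ¬ SameLine (conjAb hN (conjAb hN x)) (conjAb hN x) := by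
  have hc := conjAb_conjAb hN
  refine ⟨conjAb_bijective hN, ⟨abelianizationEquiv⟩, fun x hx => ⟨?_, ?_, ?_, ?_⟩⟩
  · rw [map_map_map_eq_inv hc]
    exact ⟨1, -1, one_ne_zero, by norm_num, by rw [zpow_one, zpow_neg_one]⟩
  · exact not_sameLine_map_of_map_map_eq_div hc hx
  · exact not_sameLine_map_map_of_map_map_eq_div hc hx
  · exact not_sameLine_map_of_map_map_eq_div hc
      ((map_ne_one_iff _ (injective_of_map_map_eq_div hc)).2 hx)
end
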